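/- arXiv:1106.1246 — 3 statements merged into one kernel-verified Lean document; each statement's English description precedes it below -/
import Mathlib

section
/- Let P, F ⊆ ℝⁿ be convex polyhedra, let (V_P, C_P, R_P) be a generator for P and (V_F, C_F, R_F) be a generator for F. Then the triple (V_P ⊕ V_F, C_P ∪ V_P, R_P ∪ V_F ∪ C_F ∪ R_F), where ⊕ denotes Minkowski sum, is a generator for the positive post-flow postf⁺(P,F); that is, the set {x + δ•y | x ∈ P, y ∈ F, δ > 0} equals gen(V_P ⊕ V_F, C_P ∪ V_P, R_P ∪ V_F ∪ C_F ∪ R_F). -/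
open Finset Pointwise

/-- `gen V C R` is the set of points generated by proper vertices `V`,
closure points `C` and rays `R`. -/
noncomputable def gen {n : ℕ} (V C R : Finset (Fin n → ℝ)) : Set (Fin n → ℝ) :=
  {x | ∃ α β γ : (Fin n → ℝ) → ℝ,
    (∀ v ∈ V, 0 ≤ α v) ∧ (∀ c ∈ C, 0 ≤ β c) ∧ (∀ r ∈ R, 0 ≤ γ r) ∧
    ((∑ v ∈ V, α v) + (∑ c ∈ C, β c) = 1) ∧
    (∃ v ∈ V, 0 < α v) ∧
    x = (∑ v ∈ V, α v • v) + (∑ c ∈ C, β c • c) + (∑ r ∈ R, γ r • r)}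

/-- The positive post-flow of `P` with respect to `F`. -/
def posPostf {n : ℕ} (P F : Set (Fin n → ℝ)) : Set (Fin n → ℝ) :=
  {z | ∃ x ∈ P, ∃ y ∈ F, ∃ δ : ℝ, 0 < δ ∧ z = x + δ • y}

/-!
Homogenize: a point of `gen V C R` is `a.2 + b.2 + g` with `a`, `b` in the cones over `{1} × V`
and `{1} × C` in `ℝ × ℝⁿ`, `a.1 > 0`, `a.1 + b.1 = 1`, and `g` in the cone spanned by `R`.
Minkowski sums of vertex sets are governed by two facts: `(a.1 * a'.1, a'.1 • a.2 + a.1 • a'.2)`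
lies in the cone over `{1} × (V + W)`, and every element of that cone splits into elements of
the cones over `{1} × V` and `{1} × W` of the same height.

For `x + δ • y` with `x ∈ P`, `y ∈ F`, a small multiple of this product supplies the vertices;
what it leaves of the vertex part of `x` becomes closure points, and what it leaves of `δ` times
the vertex part of `y`, together with `δ` times its closure points and rays, becomes rays.
Conversely, split the `V_P + V_F` part and send the `V_P` half to `x`, the `V_F` half to `y`;
the rays along `V_F` and `C_F` are absorbed into `y` as vertices and closure points, after
rescaling by their total height `δ`.
-/

section Homogenization

variable {ι E : Type*} [AddCommGroup E] [Module ℝ E]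

theorem PointedCone.mem_hull_image_finset_iff (S : Finset ι) (f : ι → E) {x : E} :
    x ∈ PointedCone.hull ℝ (f '' S) ↔ ∃ α : ι → ℝ, (∀ i ∈ S, 0 ≤ α i) ∧ x = ∑ i ∈ S, α i • f i := by
  classical
  constructor
  · intro hx
    induction hx using Submodule.span_induction with
    | mem _ hx =>
      obtain ⟨i, hi, rfl⟩ := hx
      rw [Finset.mem_coe] at hi
      refine ⟨fun j => if j = i then 1 else 0, fun j _ => by positivity, ?_⟩
      simp [ite_smul, hi]
    | zero => exact ⟨0, fun _ _ => le_rfl, by simp⟩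
    | add _ _ _ _ hx hy =>
      obtain ⟨α, hα, rfl⟩ := hx
      obtain ⟨β, hβ, rfl⟩ := hy
      exact ⟨α + β, fun i hi => add_nonneg (hα i hi) (hβ i hi), by simp [add_smul, sum_add_distrib]⟩
    | smul c _ _ hx =>
      obtain ⟨α, hα, rfl⟩ := hx
      exact ⟨(c : ℝ) • α, fun i hi => mul_nonneg c.2 (hα i hi), by simp [smul_sum, mul_smul]⟩
  · rintro ⟨α, hα, rfl⟩
    exact Submodule.sum_mem _ fun i hi =>
      PointedCone.smul_mem _ (hα i hi) (PointedCone.subset_hull ⟨i, hi, rfl⟩)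

theorem PointedCone.mem_hull_finset_iff (S : Finset E) {x : E} :
    x ∈ PointedCone.hull ℝ (S : Set E) ↔
      ∃ α : E → ℝ, (∀ v ∈ S, 0 ≤ α v) ∧ x = ∑ v ∈ S, α v • v := by
  simpa using PointedCone.mem_hull_image_finset_iff S id

theorem PointedCone.hull_union (s t : Set E) :
    PointedCone.hull ℝ (s ∪ t) = PointedCone.hull ℝ s ⊔ PointedCone.hull ℝ t :=
  Submodule.span_union s t

/-- The cone over `{1} × S` in `ℝ × E`: a pair `(t, x)` with `t > 0` lies in it iff
`x / t ∈ convexHull ℝ S`. -/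
def homogenization (S : Set E) : PointedCone ℝ (ℝ × E) :=
  PointedCone.hull ℝ ((fun v => ((1 : ℝ), v)) '' S)

theorem homogenization_union (S T : Set E) :
    homogenization (S ∪ T) = homogenization S ⊔ homogenization T := by
  rw [homogenization, Set.image_union]
  exact Submodule.span_union _ _

theorem mem_homogenization_finset_iff (S : Finset E) {a : ℝ × E} :
    a ∈ homogenization (S : Set E) ↔
      ∃ α : E → ℝ, (∀ v ∈ S, 0 ≤ α v) ∧ a = (∑ v ∈ S, α v, ∑ v ∈ S, α v • v) := by
  rw [homogenization, PointedCone.mem_hull_image_finset_iff]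
  simp only [Prod.ext_iff, Prod.fst_sum, Prod.snd_sum, Prod.smul_mk, smul_eq_mul, mul_one]

theorem fst_nonneg_of_mem_homogenization {S : Set E} {a : ℝ × E} (ha : a ∈ homogenization S) :
    0 ≤ a.1 := by
  induction ha using Submodule.span_induction with
  | mem _ h => obtain ⟨v, -, rfl⟩ := h; exact zero_le_one
  | zero => exact le_rfl
  | add _ _ _ _ hx hy => exact add_nonneg hx hy
  | smul c _ _ hx => exact mul_nonneg c.2 hx

theorem homogenization_map_snd (S : Set E) :
    (homogenization S).map (LinearMap.snd ℝ ℝ E) = PointedCone.hull ℝ S := by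
  rw [homogenization, PointedCone.map, Submodule.map_span, Set.image_image]
  simp

theorem snd_mem_hull_of_mem_homogenization {S : Set E} {a : ℝ × E} (ha : a ∈ homogenization S) :
    a.2 ∈ PointedCone.hull ℝ S :=
  homogenization_map_snd S ▸ ⟨a, ha, rfl⟩

theorem exists_mem_homogenization_snd_eq {S : Set E} {x : E} (hx : x ∈ PointedCone.hull ℝ S) :
    ∃ a ∈ homogenization S, a.2 = x := by
  rw [← homogenization_map_snd] at hx
  exact hx

theorem exists_split_of_mem_homogenization_add {S T : Set E} {m : ℝ × E}
    (hm : m ∈ homogenization (S + T)) :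
    ∃ a ∈ homogenization S, ∃ b ∈ homogenization T, a.1 = m.1 ∧ b.1 = m.1 ∧ a.2 + b.2 = m.2 := by
  induction hm using Submodule.span_induction with
  | mem _ h =>
    obtain ⟨_, ⟨s, hs, t, ht, rfl⟩, rfl⟩ := h
    exact ⟨_, PointedCone.subset_hull ⟨s, hs, rfl⟩, _, PointedCone.subset_hull ⟨t, ht, rfl⟩,
      rfl, rfl, rfl⟩
  | zero => exact ⟨0, zero_mem _, 0, zero_mem _, rfl, rfl, by simp⟩
  | add _ _ _ _ hx hy =>
    obtain ⟨a, ha, b, hb, ha1, hb1, hab⟩ := hx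
    obtain ⟨a', ha', b', hb', ha1', hb1', hab'⟩ := hy
    refine ⟨a + a', add_mem ha ha', b + b', add_mem hb hb', ?_, ?_, ?_⟩
    · simp [ha1, ha1']
    · simp [hb1, hb1']
    · simp only [Prod.snd_add, ← hab, ← hab']
      abel
  | smul c _ _ hx =>
    obtain ⟨a, ha, b, hb, ha1, hb1, hab⟩ := hx
    exact ⟨c • a, Submodule.smul_mem _ c ha, c • b, Submodule.smul_mem _ c hb,
      by simp [ha1], by simp [hb1], by simp [← hab, smul_add]⟩

theorem mul_mem_homogenization_add {S T : Set E} {a b : ℝ × E} (ha : a ∈ homogenization S)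
    (hb : b ∈ homogenization T) : (a.1 * b.1, b.1 • a.2 + a.1 • b.2) ∈ homogenization (S + T) := by
  induction ha, hb using Submodule.span_induction₂ with
  | mem_mem _ _ hx hy =>
    obtain ⟨s, hs, rfl⟩ := hx
    obtain ⟨t, ht, rfl⟩ := hy
    exact PointedCone.subset_hull ⟨s + t, Set.add_mem_add hs ht, by simp⟩
  | zero_left | zero_right =>
    convert zero_mem (homogenization (S + T)) using 1
    ext <;> simp
  | add_left _ _ _ _ _ _ hx hy | add_right _ _ _ _ _ _ hx hy =>
    convert add_mem hx hy using 1
    ext <;> simp only [Prod.fst_add, Prod.snd_add]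
    · ring
    · module
  | smul_left c _ _ _ _ h | smul_right c _ _ _ _ h =>
    obtain ⟨c, hc⟩ := c
    convert Submodule.smul_mem _ ⟨c, hc⟩ h using 1
    ext <;> simp only [Nonneg.mk_smul, Prod.smul_fst, Prod.smul_snd, smul_eq_mul]
    · ring
    · module

end Homogenization

section Generators

variable {n : ℕ}

theorem mem_gen_iff (V C R : Finset (Fin n → ℝ)) {x : Fin n → ℝ} :
    x ∈ gen V C R ↔ ∃ a ∈ homogenization (V : Set (Fin n → ℝ)),
      ∃ b ∈ homogenization (C : Set (Fin n → ℝ)), ∃ g ∈ PointedCone.hull ℝ (R : Set (Fin n → ℝ)),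
        0 < a.1 ∧ a.1 + b.1 = 1 ∧ x = a.2 + b.2 + g := by
  simp only [mem_homogenization_finset_iff, PointedCone.mem_hull_finset_iff]
  constructor
  · rintro ⟨α, β, γ, hα, hβ, hγ, hsum, hpos, rfl⟩
    exact ⟨_, ⟨α, hα, rfl⟩, _, ⟨β, hβ, rfl⟩, _, ⟨γ, hγ, rfl⟩,
      (sum_pos_iff_of_nonneg hα).2 hpos, hsum, rfl⟩
  · rintro ⟨_, ⟨α, hα, rfl⟩, _, ⟨β, hβ, rfl⟩, _, ⟨γ, hγ, rfl⟩, hpos, hsum, rfl⟩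
    exact ⟨α, β, γ, hα, hβ, hγ, hsum, (sum_pos_iff_of_nonneg hα).1 hpos, rfl⟩

variable (VP CP RP VF CF RF : Finset (Fin n → ℝ))

theorem posPostf_gen_subset_gen :
    posPostf (gen VP CP RP) (gen VF CF RF) ⊆ gen (VP + VF) (CP ∪ VP) (RP ∪ VF ∪ CF ∪ RF) := by
  rintro z ⟨x, hx, y, hy, δ, hδ, rfl⟩
  obtain ⟨a, ha, b, hb, g, hg, ha₁, hab, rfl⟩ := (mem_gen_iff _ _ _).1 hx
  obtain ⟨a', ha', b', hb', g', hg', ha₁', -, rfl⟩ := (mem_gen_iff _ _ _).1 hy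
  obtain ⟨c, hc, hca', hca⟩ : ∃ c : ℝ, 0 < c ∧ c * a'.1 ≤ 1 ∧ c * a.1 ≤ δ :=
    ⟨min a'.1⁻¹ (δ / a.1), lt_min (inv_pos.2 ha₁') (div_pos hδ ha₁),
      (mul_le_mul_of_nonneg_right (min_le_left _ _) ha₁'.le).trans_eq (inv_mul_cancel₀ ha₁'.ne'),
      (mul_le_mul_of_nonneg_right (min_le_right _ _) ha₁.le).trans_eq (div_mul_cancel₀ _ ha₁.ne')⟩
  rw [mem_gen_iff]
  refine ⟨c • (a.1 * a'.1, a'.1 • a.2 + a.1 • a'.2), ?_, b + (1 - c * a'.1) • a, ?_,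
    g + (δ - c * a.1) • a'.2 + δ • b'.2 + δ • g', ?_, ?_, ?_, ?_⟩
  · rw [coe_add]
    exact PointedCone.smul_mem _ hc.le (mul_mem_homogenization_add ha ha')
  · rw [coe_union, homogenization_union]
    exact add_mem (Submodule.mem_sup_left hb)
      (Submodule.mem_sup_right (PointedCone.smul_mem _ (sub_nonneg.2 hca') ha))
  · simp only [coe_union, PointedCone.hull_union]
    refine add_mem (add_mem (add_mem ?_ ?_) ?_) ?_
    · exact Submodule.mem_sup_left (Submodule.mem_sup_left (Submodule.mem_sup_left hg))
    · exact Submodule.mem_sup_left (Submodule.mem_sup_left (Submodule.mem_sup_right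
        (PointedCone.smul_mem _ (sub_nonneg.2 hca) (snd_mem_hull_of_mem_homogenization ha'))))
    · exact Submodule.mem_sup_left (Submodule.mem_sup_right
        (PointedCone.smul_mem _ hδ.le (snd_mem_hull_of_mem_homogenization hb')))
    · exact Submodule.mem_sup_right (PointedCone.smul_mem _ hδ.le hg')
  · simp only [Prod.smul_fst, smul_eq_mul]
    positivity
  · simp only [Prod.smul_fst, Prod.fst_add, smul_eq_mul]
    linear_combination hab
  · simp only [Prod.smul_snd, Prod.snd_add]
    module

theorem gen_subset_posPostf_gen :
    gen (VP + VF) (CP ∪ VP) (RP ∪ VF ∪ CF ∪ RF) ⊆ posPostf (gen VP CP RP) (gen VF CF RF) := by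
  intro z hz
  obtain ⟨m, hm, B, hB, G, hG, hm₁, hmB, rfl⟩ := (mem_gen_iff _ _ _).1 hz
  rw [coe_add] at hm
  rw [coe_union, homogenization_union] at hB
  simp only [coe_union, PointedCone.hull_union] at hG
  obtain ⟨a, ha, a', ha', ha₁, ha₁', haa'⟩ := exists_split_of_mem_homogenization_add hm
  obtain ⟨b, hb, bv, hbv, rfl⟩ := Submodule.mem_sup.1 hB
  obtain ⟨_, hG₃, gr, hgr, rfl⟩ := Submodule.mem_sup.1 hG
  obtain ⟨_, hG₂, gc, hgc, rfl⟩ := Submodule.mem_sup.1 hG₃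
  obtain ⟨g, hg, gv, hgv, rfl⟩ := Submodule.mem_sup.1 hG₂
  obtain ⟨mv, hmv, rfl⟩ := exists_mem_homogenization_snd_eq hgv
  obtain ⟨mc, hmc, rfl⟩ := exists_mem_homogenization_snd_eq hgc
  set δ := m.1 + mv.1 + mc.1
  have hδ : 0 < δ := by
    linarith [fst_nonneg_of_mem_homogenization hmv, fst_nonneg_of_mem_homogenization hmc]
  refine ⟨(a + bv).2 + b.2 + g, ?_, δ⁻¹ • (a'.2 + mv.2 + mc.2 + gr), ?_, δ, hδ, ?_⟩
  · refine (mem_gen_iff _ _ _).2 ⟨a + bv, add_mem ha hbv, b, hb, g, hg, ?_, ?_, rfl⟩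
    · simp only [Prod.fst_add]
      linarith [fst_nonneg_of_mem_homogenization hbv]
    · simp only [Prod.fst_add] at hmB ⊢
      linarith
  · refine (mem_gen_iff _ _ _).2 ⟨δ⁻¹ • (a' + mv), PointedCone.smul_mem _ (by positivity)
      (add_mem ha' hmv), δ⁻¹ • mc, PointedCone.smul_mem _ (by positivity) hmc, δ⁻¹ • gr,
      PointedCone.smul_mem _ (by positivity) hgr, ?_, ?_, ?_⟩
    · simp only [Prod.smul_fst, Prod.fst_add, smul_eq_mul]
      exact mul_pos (inv_pos.2 hδ) (by linarith [fst_nonneg_of_mem_homogenization hmv])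
    · simp only [Prod.smul_fst, Prod.fst_add, smul_eq_mul]
      field_simp
      linarith
    · simp only [Prod.smul_snd, Prod.snd_add, smul_add]
  · simp only [Prod.snd_add, smul_inv_smul₀ hδ.ne', ← haa']
    abel

end Generators

theorem positive_postflow_generator {n : ℕ} (P F : Set (Fin n → ℝ))
    (VP CP RP VF CF RF : Finset (Fin n → ℝ))
    (hP : P = gen VP CP RP) (hF : F = gen VF CF RF) :
    posPostf P F = gen (VP + VF) (CP ∪ VP) (RP ∪ VF ∪ CF ∪ RF) := by
  subst hP hF
  exact (posPostf_gen_subset_gen ..).antisymm (gen_subset_posPostf_gen ..)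
end

section
/- Let P, F ⊆ ℝⁿ, let (V_P, C_P, R_P) be a generator for P and (V_F, C_F, R_F) be a generator for F. Then every point z of the positive post-flow postf⁺(P,F) = {x + δ•y | x ∈ P, y ∈ F, δ > 0} belongs to gen(V_P ⊕ V_F, C_P ∪ V_P, R_P ∪ V_F ∪ C_F ∪ R_F), where ⊕ denotes Minkowski sum. -/
open Finset Pointwise

private lemma sum_ite_subset' {α M : Type*} [DecidableEq α] [AddCommMonoid M]
    {s t : Finset α} (h : t ⊆ s) (f : α → M) :
    ∑ x ∈ s, (if x ∈ t then f x else 0) = ∑ x ∈ t, f x := by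
  rw [Finset.sum_ite_mem, Finset.inter_eq_right.mpr h]

private lemma sum_ite_eq_pt {α M : Type*} [DecidableEq α] [AddCommMonoid M]
    {s : Finset α} {b : α} (h : b ∈ s) (f : α → M) :
    ∑ x ∈ s, (if x = b then f x else 0) = f b := by
  rw [Finset.sum_ite_eq' s b f, if_pos h]

theorem positive_postflow_subset_gen {n : ℕ} (P F : Set (Fin n → ℝ))
    (VP CP RP VF CF RF : Finset (Fin n → ℝ))
    (hP : P = gen VP CP RP) (hF : F = gen VF CF RF)
    (z : Fin n → ℝ) (hz : z ∈ posPostf P F) :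
    z ∈ gen (VP + VF) (CP ∪ VP) (RP ∪ VF ∪ CF ∪ RF) := by
  classical
  obtain ⟨x, hx, y, hy, δ, hδ, hzeq⟩ := hz
  rw [hP] at hx
  rw [hF] at hy
  obtain ⟨α, β, γ, hα, hβ, hγ, hsum, ⟨v0, hv0V, hv0pos⟩, hxeq⟩ := hx
  obtain ⟨α', β', γ', hα', hβ', hγ', hsum', ⟨w0, hw0V, hw0pos⟩, hyeq⟩ := hy
  set t : ℝ := min (α v0) (δ * α' w0) with ht_def
  have ht : 0 < t := lt_min hv0pos (mul_pos hδ hw0pos)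
  have htα : t ≤ α v0 := min_le_left _ _
  have htα' : t ≤ δ * α' w0 := min_le_right _ _
  set A : (Fin n → ℝ) → ℝ := fun u => if u = v0 + w0 then t else 0 with hA_def
  set B : (Fin n → ℝ) → ℝ := fun c =>
    (if c ∈ CP then β c else 0) + (if c ∈ VP then α c else 0) -
      (if c = v0 then t else 0) with hB_def
  set G : (Fin n → ℝ) → ℝ := fun r =>
    (if r ∈ RP then γ r else 0) + (if r ∈ VF then δ * α' r else 0) +
      (if r ∈ CF then δ * β' r else 0) + (if r ∈ RF then δ * γ' r else 0) -
      (if r = w0 then t else 0) with hG_def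
  have hvw : v0 + w0 ∈ VP + VF := Finset.add_mem_add hv0V hw0V
  have hCPsub : CP ⊆ CP ∪ VP := Finset.subset_union_left
  have hVPsub : VP ⊆ CP ∪ VP := Finset.subset_union_right
  have hRPsub : RP ⊆ RP ∪ VF ∪ CF ∪ RF := by intro r hr; simp [hr]
  have hVFsub : VF ⊆ RP ∪ VF ∪ CF ∪ RF := by intro r hr; simp [hr]
  have hCFsub : CF ⊆ RP ∪ VF ∪ CF ∪ RF := by intro r hr; simp [hr]
  have hRFsub : RF ⊆ RP ∪ VF ∪ CF ∪ RF := by intro r hr; simp [hr]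
  refine ⟨A, B, G, ?_, ?_, ?_, ?_, ⟨v0 + w0, hvw, ?_⟩, ?_⟩
  · intro v _; simp only [hA_def]; split <;> [exact le_of_lt ht; rfl]
  · intro c hc
    simp only [hB_def]
    by_cases h : c = v0
    · subst h
      have h1 : (0:ℝ) ≤ if c ∈ CP then β c else 0 := by
        split <;> [exact hβ _ ‹_›; rfl]
      rw [if_pos rfl, if_pos hv0V]
      linarith
    · rw [if_neg h]
      have h1 : (0:ℝ) ≤ if c ∈ CP then β c else 0 := by
        split <;> [exact hβ _ ‹_›; rfl]
      have h2 : (0:ℝ) ≤ if c ∈ VP then α c else 0 := by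
        split <;> [exact hα _ ‹_›; rfl]
      linarith
  · intro r hr
    have h1 : (0:ℝ) ≤ if r ∈ RP then γ r else 0 := by
      split <;> [exact hγ _ ‹_›; rfl]
    have h2 : (0:ℝ) ≤ if r ∈ VF then δ * α' r else 0 := by
      split <;> [exact mul_nonneg hδ.le (hα' _ ‹_›); rfl]
    have h3 : (0:ℝ) ≤ if r ∈ CF then δ * β' r else 0 := by
      split <;> [exact mul_nonneg hδ.le (hβ' _ ‹_›); rfl]
    have h4 : (0:ℝ) ≤ if r ∈ RF then δ * γ' r else 0 := by
      split <;> [exact mul_nonneg hδ.le (hγ' _ ‹_›); rfl]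
    simp only [hG_def]
    by_cases h : r = w0
    · subst h
      rw [if_pos rfl, if_pos hw0V] at *
      linarith
    · rw [if_neg h]
      linarith
  · have h1 : ∑ u ∈ VP + VF, A u = t := sum_ite_eq_pt hvw (fun _ => t)
    have h2 : ∑ c ∈ CP ∪ VP, B c
        = (∑ c ∈ CP, β c) + (∑ v ∈ VP, α v) - t := by
      simp only [hB_def, Finset.sum_sub_distrib, Finset.sum_add_distrib]
      rw [sum_ite_subset' hCPsub, sum_ite_subset' hVPsub,
        sum_ite_eq_pt (hVPsub hv0V) (fun _ => t)]
    rw [h1, h2]; linarith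
  · simp only [hA_def, if_pos rfl]; exact ht
  · have h1 : ∑ u ∈ VP + VF, A u • u = t • (v0 + w0) := by
      have : ∀ u, A u • u = if u = v0 + w0 then t • u else 0 := by
        intro u; simp only [hA_def]; split <;> simp
      simp only [this]
      exact sum_ite_eq_pt hvw (fun u => t • u)
    have h2 : ∑ c ∈ CP ∪ VP, B c • c
        = (∑ c ∈ CP, β c • c) + (∑ v ∈ VP, α v • v) - t • v0 := by
      have : ∀ c, B c • c = (if c ∈ CP then β c • c else 0) +
          (if c ∈ VP then α c • c else 0) - (if c = v0 then t • c else 0) := by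
        intro c; simp only [hB_def, sub_smul, add_smul]
        congr 2 <;> (split <;> simp)
      simp only [this, Finset.sum_sub_distrib, Finset.sum_add_distrib]
      rw [sum_ite_subset' hCPsub, sum_ite_subset' hVPsub,
        sum_ite_eq_pt (hVPsub hv0V) (fun c => t • c)]
    have h3 : ∑ r ∈ RP ∪ VF ∪ CF ∪ RF, G r • r
        = (∑ r ∈ RP, γ r • r) + (∑ w ∈ VF, (δ * α' w) • w) +
          (∑ c ∈ CF, (δ * β' c) • c) + (∑ r ∈ RF, (δ * γ' r) • r) - t • w0 := by
      have : ∀ r, G r • r = (if r ∈ RP then γ r • r else 0) +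
          (if r ∈ VF then (δ * α' r) • r else 0) +
          (if r ∈ CF then (δ * β' r) • r else 0) +
          (if r ∈ RF then (δ * γ' r) • r else 0) -
          (if r = w0 then t • r else 0) := by
        intro r; simp only [hG_def, sub_smul, add_smul]
        congr 2
        congr 2
        all_goals (split <;> simp)
      simp only [this, Finset.sum_sub_distrib, Finset.sum_add_distrib]
      rw [sum_ite_subset' hRPsub, sum_ite_subset' hVFsub,
        sum_ite_subset' hCFsub, sum_ite_subset' hRFsub,
        sum_ite_eq_pt (hVFsub hw0V) (fun r => t • r)]
    rw [h1, h2, h3, hzeq, hxeq, hyeq]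
    have e1 : ∀ (s : Finset (Fin n → ℝ)) (f : (Fin n → ℝ) → ℝ),
        δ • ∑ w ∈ s, f w • w = ∑ w ∈ s, (δ * f w) • w := by
      intro s f; rw [Finset.smul_sum]; simp [smul_smul]
    rw [smul_add, smul_add, e1, e1, e1]
    module
end

section
/- Let P, F ⊆ ℝⁿ, let (V_P, C_P, R_P) be a generator for P and (V_F, C_F, R_F) be a generator for F. Then every point z of gen(V_P ⊕ V_F, C_P ∪ V_P, R_P ∪ V_F ∪ C_F ∪ R_F), where ⊕ denotes Minkowski sum, belongs to the positive post-flow postf⁺(P,F) = {x + δ•y | x ∈ P, y ∈ F, δ > 0}; that is, there exist x ∈ P, y ∈ F and δ > 0 with z = x + δ•y. -/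
open Finset Pointwise

set_option maxHeartbeats 1000000 in
theorem gen_subset_positive_postflow {n : ℕ} (P F : Set (Fin n → ℝ))
    (VP CP RP VF CF RF : Finset (Fin n → ℝ))
    (hP : P = gen VP CP RP) (hF : F = gen VF CF RF)
    (z : Fin n → ℝ) (hz : z ∈ gen (VP + VF) (CP ∪ VP) (RP ∪ VF ∪ CF ∪ RF)) :
    ∃ x ∈ P, ∃ y ∈ F, ∃ δ : ℝ, 0 < δ ∧ z = x + δ • y := by
  classical
  subst hP hF
  obtain ⟨α, β, γ, hα, hβ, hγ, hsum, ⟨w0, hw0, hw0pos⟩, hzeq⟩ := hz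
  set W : Finset (Fin n → ℝ) := VP + VF with hWdef
  have hdec : ∀ w ∈ W, ∃ v, v ∈ VP ∧ ∃ u, u ∈ VF ∧ v + u = w := by
    intro w hw
    rcases Finset.mem_add.mp hw with ⟨v, hv, u, hu, h⟩
    exact ⟨v, hv, u, hu, h⟩
  choose! p hp q hq hpq using hdec
  -- weight functions
  set a : (Fin n → ℝ) → ℝ := fun v =>
    (∑ w ∈ W.filter (fun w => p w = v), α w) + (if v ∈ VP \ CP then β v else 0) with hadef
  set e : (Fin n → ℝ) → ℝ := fun u =>
    (∑ w ∈ W.filter (fun w => q w = u), α w) + (if u ∈ VF \ RP then γ u else 0) with hedef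
  set h : (Fin n → ℝ) → ℝ := fun c => if c ∈ CF \ (RP ∪ VF) then γ c else 0 with hhdef
  set k : (Fin n → ℝ) → ℝ := fun r => if r ∈ RF \ (RP ∪ VF ∪ CF) then γ r else 0 with hkdef
  set δ : ℝ := (∑ u ∈ VF, e u) + (∑ c ∈ CF, h c) with hδdef
  -- nonnegativity
  have hβ' : ∀ v ∈ VP \ CP, 0 ≤ β v := fun v hv =>
    hβ v (Finset.mem_union_right _ (Finset.mem_sdiff.mp hv).1)
  have hγVF : ∀ u ∈ VF \ RP, 0 ≤ γ u := fun u hu => hγ u (by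
    have := (Finset.mem_sdiff.mp hu).1
    exact Finset.mem_union_left _ (Finset.mem_union_left _ (Finset.mem_union_right _ this)))
  have hγCF : ∀ c ∈ CF \ (RP ∪ VF), 0 ≤ γ c := fun c hc => hγ c (by
    have := (Finset.mem_sdiff.mp hc).1
    exact Finset.mem_union_left _ (Finset.mem_union_right _ this))
  have hγRF : ∀ r ∈ RF \ (RP ∪ VF ∪ CF), 0 ≤ γ r := fun r hr => hγ r (by
    have := (Finset.mem_sdiff.mp hr).1
    exact Finset.mem_union_right _ this)
  have hfib_nonneg : ∀ (g : (Fin n → ℝ) → (Fin n → ℝ)) (v : Fin n → ℝ),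
      0 ≤ ∑ w ∈ W.filter (fun w => g w = v), α w := by
    intro g v
    refine Finset.sum_nonneg fun w hw => hα w (Finset.mem_filter.mp hw).1
  have ha_nonneg : ∀ v ∈ VP, 0 ≤ a v := by
    intro v _; refine add_nonneg (hfib_nonneg p v) ?_
    split_ifs with hc
    · exact hβ' v hc
    · exact le_refl 0
  have he_nonneg : ∀ u ∈ VF, 0 ≤ e u := by
    intro u _; refine add_nonneg (hfib_nonneg q u) ?_
    split_ifs with hc
    · exact hγVF u hc
    · exact le_refl 0
  have hh_nonneg : ∀ c ∈ CF, 0 ≤ h c := by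
    intro c _
    simp only [hhdef]
    split_ifs with hc
    · exact hγCF c hc
    · exact le_refl 0
  have hk_nonneg : ∀ r ∈ RF, 0 ≤ k r := by
    intro r _
    simp only [hkdef]
    split_ifs with hc
    · exact hγRF r hc
    · exact le_refl 0
  -- positivity at w0's images
  have hfib_pos : ∀ (g : (Fin n → ℝ) → (Fin n → ℝ)),
      α w0 ≤ ∑ w ∈ W.filter (fun w => g w = g w0), α w := by
    intro g
    refine Finset.single_le_sum (fun w hw => hα w (Finset.mem_filter.mp hw).1) ?_
    exact Finset.mem_filter.mpr ⟨hw0, rfl⟩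
  have ha_pos : 0 < a (p w0) := by
    have h1 := hfib_pos p
    have h2 : (0:ℝ) ≤ if p w0 ∈ VP \ CP then β (p w0) else 0 := by
      split_ifs with hc
      · exact hβ' _ hc
      · exact le_refl 0
    simp only [hadef]
    linarith
  have he_pos : 0 < e (q w0) := by
    have h1 := hfib_pos q
    have h2 : (0:ℝ) ≤ if q w0 ∈ VF \ RP then γ (q w0) else 0 := by
      split_ifs with hc
      · exact hγVF _ hc
      · exact le_refl 0
    simp only [hedef]
    linarith
  have hδpos : 0 < δ := by
    have h1 : e (q w0) ≤ ∑ u ∈ VF, e u :=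
      Finset.single_le_sum he_nonneg (hq w0 hw0)
    have h2 : (0:ℝ) ≤ ∑ c ∈ CF, h c := Finset.sum_nonneg hh_nonneg
    calc (0:ℝ) < e (q w0) := he_pos
      _ ≤ δ := by rw [hδdef]; linarith
  -- scalar sum identities
  have hsum_a : ∑ v ∈ VP, a v = (∑ w ∈ W, α w) + ∑ v ∈ VP \ CP, β v := by
    rw [hadef, Finset.sum_add_distrib]
    congr 1
    · exact Finset.sum_fiberwise_of_maps_to hp α
    · rw [Finset.sum_ite_mem, Finset.inter_eq_right.mpr Finset.sdiff_subset]
  have hsum_e : ∑ u ∈ VF, e u = (∑ w ∈ W, α w) + ∑ u ∈ VF \ RP, γ u := by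
    rw [hedef, Finset.sum_add_distrib]
    congr 1
    · exact Finset.sum_fiberwise_of_maps_to hq α
    · rw [Finset.sum_ite_mem, Finset.inter_eq_right.mpr Finset.sdiff_subset]
  have hsum_h : ∑ c ∈ CF, h c = ∑ c ∈ CF \ (RP ∪ VF), γ c := by
    rw [hhdef, Finset.sum_ite_mem, Finset.inter_eq_right.mpr Finset.sdiff_subset]
  -- vector sum identities
  have hvec_a : ∑ v ∈ VP, a v • v
      = (∑ w ∈ W, α w • p w) + ∑ v ∈ VP \ CP, β v • v := by
    simp only [hadef, add_smul]
    rw [Finset.sum_add_distrib]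
    congr 1
    · rw [← Finset.sum_fiberwise_of_maps_to hp (fun w => α w • p w)]
      refine Finset.sum_congr rfl fun v hv => ?_
      rw [Finset.sum_smul]
      exact Finset.sum_congr rfl fun w hw => by rw [(Finset.mem_filter.mp hw).2]
    · simp only [ite_smul, zero_smul]
      rw [Finset.sum_ite_mem, Finset.inter_eq_right.mpr Finset.sdiff_subset]
  have hvec_e : ∑ u ∈ VF, e u • u
      = (∑ w ∈ W, α w • q w) + ∑ u ∈ VF \ RP, γ u • u := by
    simp only [hedef, add_smul]
    rw [Finset.sum_add_distrib]
    congr 1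
    · rw [← Finset.sum_fiberwise_of_maps_to hq (fun w => α w • q w)]
      refine Finset.sum_congr rfl fun v hv => ?_
      rw [Finset.sum_smul]
      exact Finset.sum_congr rfl fun w hw => by rw [(Finset.mem_filter.mp hw).2]
    · simp only [ite_smul, zero_smul]
      rw [Finset.sum_ite_mem, Finset.inter_eq_right.mpr Finset.sdiff_subset]
  have hvec_h : ∑ c ∈ CF, h c • c = ∑ c ∈ CF \ (RP ∪ VF), γ c • c := by
    simp only [hhdef, ite_smul, zero_smul]
    rw [Finset.sum_ite_mem, Finset.inter_eq_right.mpr Finset.sdiff_subset]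
  have hvec_k : ∑ r ∈ RF, k r • r = ∑ r ∈ RF \ (RP ∪ VF ∪ CF), γ r • r := by
    simp only [hkdef, ite_smul, zero_smul]
    rw [Finset.sum_ite_mem, Finset.inter_eq_right.mpr Finset.sdiff_subset]
  -- union decompositions
  have hβunion : ∑ c ∈ CP ∪ VP, β c • c
      = (∑ c ∈ CP, β c • c) + ∑ v ∈ VP \ CP, β v • v := by
    rw [← Finset.union_sdiff_self_eq_union, Finset.sum_union Finset.disjoint_sdiff]
  have hβunion' : ∑ c ∈ CP ∪ VP, β c
      = (∑ c ∈ CP, β c) + ∑ v ∈ VP \ CP, β v := by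
    rw [← Finset.union_sdiff_self_eq_union, Finset.sum_union Finset.disjoint_sdiff]
  have hγunion : ∑ r ∈ RP ∪ VF ∪ CF ∪ RF, γ r • r
      = (∑ r ∈ RP, γ r • r) + (∑ u ∈ VF \ RP, γ u • u)
        + (∑ c ∈ CF \ (RP ∪ VF), γ c • c) + ∑ r ∈ RF \ (RP ∪ VF ∪ CF), γ r • r := by
    rw [show RP ∪ VF ∪ CF ∪ RF = (RP ∪ VF ∪ CF) ∪ (RF \ (RP ∪ VF ∪ CF)) from
        (Finset.union_sdiff_self_eq_union).symm,
      Finset.sum_union Finset.disjoint_sdiff,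
      show RP ∪ VF ∪ CF = (RP ∪ VF) ∪ (CF \ (RP ∪ VF)) from
        (Finset.union_sdiff_self_eq_union).symm,
      Finset.sum_union Finset.disjoint_sdiff,
      show RP ∪ VF = RP ∪ (VF \ RP) from (Finset.union_sdiff_self_eq_union).symm,
      Finset.sum_union Finset.disjoint_sdiff]
  -- decompose the vertex sum over W
  have hWsplit : ∑ w ∈ W, α w • w
      = (∑ w ∈ W, α w • p w) + ∑ w ∈ W, α w • q w := by
    rw [← Finset.sum_add_distrib]
    refine Finset.sum_congr rfl fun w hw => ?_
    rw [← smul_add, hpq w hw]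
  -- the witnesses
  set x : Fin n → ℝ :=
    (∑ v ∈ VP, a v • v) + (∑ c ∈ CP, β c • c) + (∑ r ∈ RP, γ r • r) with hxdef
  set y : Fin n → ℝ :=
    δ⁻¹ • ((∑ u ∈ VF, e u • u) + (∑ c ∈ CF, h c • c) + (∑ r ∈ RF, k r • r)) with hydef
  refine ⟨x, ?_, y, ?_, δ, hδpos, ?_⟩
  · -- x ∈ gen VP CP RP
    refine ⟨a, β, γ, ha_nonneg, fun c hc => hβ c (Finset.mem_union_left _ hc),
      fun r hr => hγ r (by
        exact Finset.mem_union_left _ (Finset.mem_union_left _ (Finset.mem_union_left _ hr))),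
      ?_, ⟨p w0, hp w0 hw0, ha_pos⟩, hxdef⟩
    rw [hsum_a]
    have := hsum
    rw [hβunion'] at this
    linarith
  · -- y ∈ gen VF CF RF
    refine ⟨fun u => δ⁻¹ * e u, fun c => δ⁻¹ * h c, fun r => δ⁻¹ * k r,
      fun u hu => mul_nonneg (inv_nonneg.mpr hδpos.le) (he_nonneg u hu),
      fun c hc => mul_nonneg (inv_nonneg.mpr hδpos.le) (hh_nonneg c hc),
      fun r hr => mul_nonneg (inv_nonneg.mpr hδpos.le) (hk_nonneg r hr),
      ?_, ⟨q w0, hq w0 hw0, mul_pos (inv_pos.mpr hδpos) he_pos⟩, ?_⟩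
    · rw [← Finset.mul_sum, ← Finset.mul_sum, ← mul_add, ← hδdef,
        inv_mul_cancel₀ (ne_of_gt hδpos)]
    · rw [hydef]
      simp only [smul_add, Finset.smul_sum, smul_smul]
  · -- z = x + δ • y
    have hδy : δ • y = (∑ u ∈ VF, e u • u) + (∑ c ∈ CF, h c • c) + ∑ r ∈ RF, k r • r := by
      rw [hydef, smul_smul, mul_inv_cancel₀ (ne_of_gt hδpos), one_smul]
    rw [hδy, hzeq, hxdef, hWsplit, hβunion, hγunion, hvec_a, hvec_e, hvec_h, hvec_k]
    abel
end
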